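/- arXiv:0909.0931 — 2 statements merged into one kernel-verified Lean document; each statement's English description precedes it below -/
import Mathlib

section
/- Bound on the recovered image of the code projector: Let {E_i}_{i∈I} be a TP Kraus family on ℂⁿ and P an orthogonal projection of rank d ≥ 1. Let {R_j}_{j∈J} be a finite Kraus family with ∑_j R_jᴴ R_j = 1 and R_j = P R_j for all j, and let η ∈ [0,1] be such that ⟨φ, (∑_{j,i} R_j E_i (φφᴴ) E_iᴴ R_jᴴ) φ⟩ ≥ 1 − η for every unit vector φ with P φ = φ. Then for every unit vector ψ with P ψ = ψ: ⟨ψ, (∑_{j,i} R_j E_i P E_iᴴ R_jᴴ) ψ⟩ ≤ 1 + (d−1)·η. -/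
open Matrix
open scoped ComplexOrder

/-!
Write `N(B) = ∑ K B Kᴴ` for the composite channel with Kraus operators `K_(j,i) = R_j E_i`,
`N†` for its dual, and `ρ = ψψᴴ`. Then `⟨ψ, N(P) ψ⟩ = tr(N†(ρ) P)`, and `P = ρ + Q` with `Q`
the projection onto the code vectors orthogonal to `ψ`. The `ρ` part is
`tr(N(ρ) ρ) ≤ tr N(ρ) = 1`. For a unit code vector `φ ⊥ ψ` we have `ρ + φφᴴ ≤ 1`, so
`⟨φ, N†(ρ) φ⟩ = tr(N(φφᴴ) ρ) ≤ 1 - ⟨φ, N(φφᴴ) φ⟩ ≤ η`. Hence `Q N†(ρ) Q ≤ η Q`, and taking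
traces bounds the `Q` part by `η tr Q = η (d - 1)`.
-/

section

variable {m : Type*} [Fintype m]

namespace Matrix

theorem trace_eq_rank_of_isIdempotentElem {K : Type*} [Field K] {A : Matrix m m K}
    (hA : IsIdempotentElem A) : A.trace = A.rank := by
  classical
  have hlin : IsIdempotentElem A.mulVecLin := by
    rw [IsIdempotentElem, Module.End.mul_eq_comp, ← mulVecLin_mul, hA.eq]
  rw [rank, ← (LinearMap.IsIdempotentElem.isProj_range _ hlin).trace, ← toLin'_apply',
    trace_toLin'_eq]

theorem re_trace_nonneg_of_forall_re_dotProduct_mulVec_nonneg {X : Matrix m m ℂ}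
    (h : ∀ x, 0 ≤ (star x ⬝ᵥ (X *ᵥ x)).re) : 0 ≤ X.trace.re := by
  classical
  rw [trace, Complex.re_sum]
  refine Finset.sum_nonneg fun i _ => ?_
  simpa using h (Pi.single i 1)

theorem re_dotProduct_mulVec_le_of_forall_unit {A Q : Matrix m m ℂ} {c : ℝ}
    (h : ∀ φ, star φ ⬝ᵥ φ = 1 → Q *ᵥ φ = φ → (star φ ⬝ᵥ (A *ᵥ φ)).re ≤ c)
    {φ : m → ℂ} (hφ : Q *ᵥ φ = φ) : (star φ ⬝ᵥ (A *ᵥ φ)).re ≤ c * (star φ ⬝ᵥ φ).re := by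
  classical
  rcases eq_or_ne φ 0 with rfl | hφ0
  · simp
  obtain ⟨r, hr, hrφ⟩ := RCLike.pos_iff_exists_ofReal.mp (dotProduct_star_self_pos_iff.mpr hφ0)
  replace hrφ : (r : ℂ) = star φ ⬝ᵥ φ := hrφ
  set s : ℝ := (√r)⁻¹
  have hs : s * s = r⁻¹ := by rw [← mul_inv, Real.mul_self_sqrt hr.le]
  have hscale : ∀ B : Matrix m m ℂ, star ((s : ℂ) • φ) ⬝ᵥ (B *ᵥ ((s : ℂ) • φ))
      = ((s * s : ℝ) : ℂ) * (star φ ⬝ᵥ (B *ᵥ φ)) := by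
    intro B
    simp [mulVec_smul, smul_dotProduct, mul_assoc]
  have hunit := h ((s : ℂ) • φ) (by simpa [← hrφ, hs, hr.ne'] using hscale 1)
    (by rw [mulVec_smul, hφ])
  rw [hscale, hs, Complex.re_ofReal_mul] at hunit
  rw [← hrφ, Complex.ofReal_re, mul_comm]
  exact (inv_mul_le_iff₀ hr).mp hunit

theorem re_trace_mul_le_of_forall_unit {A Q : Matrix m m ℂ} {c : ℝ}
    (hQ : IsStarProjection Q)
    (h : ∀ φ, star φ ⬝ᵥ φ = 1 → Q *ᵥ φ = φ → (star φ ⬝ᵥ (A *ᵥ φ)).re ≤ c) :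
    (A * Q).trace.re ≤ c * Q.trace.re := by
  have hQQ : Q * Q = Q := hQ.isIdempotentElem.eq
  have hQH : Qᴴ = Q := hQ.isSelfAdjoint.star_eq
  have hadj : ∀ x y, star x ⬝ᵥ (Q *ᵥ y) = star (Q *ᵥ x) ⬝ᵥ y := fun x y => by
    rw [dotProduct_mulVec, star_mulVec, hQH]
  have hpos : 0 ≤ (c • Q - Q * A * Q).trace.re :=
      re_trace_nonneg_of_forall_re_dotProduct_mulVec_nonneg fun x => by
    have hQx := re_dotProduct_mulVec_le_of_forall_unit h (φ := Q *ᵥ x)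
      (by rw [mulVec_mulVec, hQQ])
    have hQ2 : star x ⬝ᵥ (Q *ᵥ x) = star (Q *ᵥ x) ⬝ᵥ (Q *ᵥ x) := by
      conv_lhs => rw [← hQQ, ← mulVec_mulVec]
      rw [hadj]
    have hQAQ : star x ⬝ᵥ ((Q * A * Q) *ᵥ x) = star (Q *ᵥ x) ⬝ᵥ (A *ᵥ (Q *ᵥ x)) := by
      rw [mul_assoc, ← mulVec_mulVec, hadj, ← mulVec_mulVec]
    rw [sub_mulVec, dotProduct_sub, smul_mulVec, dotProduct_smul, hQ2, hQAQ]
    simpa using hQx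
  rw [trace_sub, trace_smul, trace_mul_cycle, hQQ, trace_mul_comm] at hpos
  simpa using hpos

theorem re_trace_mul_le_re_trace_of_isStarProjection {M p : Matrix m m ℂ} (hM : M.PosSemidef)
    (hp : IsStarProjection p) : (M * p).trace.re ≤ M.trace.re := by
  classical
  have hX := hp.one_sub
  have hXH : (1 - p)ᴴ = 1 - p := hX.isSelfAdjoint.star_eq
  have hpos := (hM.conjTranspose_mul_mul_same (1 - p)).trace_nonneg
  rw [trace_mul_cycle, hXH, hX.isIdempotentElem.eq, trace_mul_comm, mul_sub, mul_one,
    trace_sub] at hpos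
  simpa using (Complex.le_def.mp hpos).1

theorem isStarProjection_vecMulVec_star {ψ : m → ℂ} (hψ : star ψ ⬝ᵥ ψ = 1) :
    IsStarProjection (vecMulVec ψ (star ψ)) where
  isIdempotentElem := by
    rw [IsIdempotentElem, vecMulVec_mul_vecMulVec, hψ, one_smul]
  isSelfAdjoint := by
    rw [IsSelfAdjoint, star_eq_conjTranspose, conjTranspose_vecMulVec, star_star]

theorem trace_vecMulVec_star (ψ : m → ℂ) :
    (vecMulVec ψ (star ψ)).trace = star ψ ⬝ᵥ ψ := by
  rw [trace_vecMulVec, dotProduct_comm]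

theorem dotProduct_mulVec_eq_trace (M : Matrix m m ℂ) (ψ : m → ℂ) :
    star ψ ⬝ᵥ (M *ᵥ ψ) = (M * vecMulVec ψ (star ψ)).trace := by
  rw [mul_vecMulVec, trace_vecMulVec, dotProduct_comm]

end Matrix

section Kraus

variable {ι : Type*} [Fintype ι]

def krausMap (K : ι → Matrix m m ℂ) (B : Matrix m m ℂ) : Matrix m m ℂ :=
  ∑ i, K i * B * (K i)ᴴ

theorem krausMap_posSemidef (K : ι → Matrix m m ℂ) {B : Matrix m m ℂ} (hB : B.PosSemidef) :
    (krausMap K B).PosSemidef :=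
  posSemidef_sum _ fun i _ => hB.mul_mul_conjTranspose_same (K i)

theorem trace_krausMap_mul (K : ι → Matrix m m ℂ) (B X : Matrix m m ℂ) :
    (krausMap K B * X).trace = (B * krausMap (fun i => (K i)ᴴ) X).trace := by
  simp only [krausMap, Finset.sum_mul, Finset.mul_sum, trace_sum, conjTranspose_conjTranspose]
  refine Finset.sum_congr rfl fun i _ => ?_
  calc (K i * B * (K i)ᴴ * X).trace = (K i * (B * (K i)ᴴ * X)).trace := by
        simp only [mul_assoc]
    _ = (B * ((K i)ᴴ * X * K i)).trace := by rw [trace_mul_comm]; simp only [mul_assoc]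

theorem krausMap_prod {J I : Type*} [Fintype J] [Fintype I]
    (R : J → Matrix m m ℂ) (E : I → Matrix m m ℂ) (B : Matrix m m ℂ) :
    krausMap (fun p : J × I => R p.1 * E p.2) B =
      ∑ j, ∑ i, R j * E i * B * (E i)ᴴ * (R j)ᴴ := by
  simp only [krausMap, Fintype.sum_prod_type, conjTranspose_mul, mul_assoc]

variable [DecidableEq m]

def IsTracePreserving (K : ι → Matrix m m ℂ) : Prop :=
  ∑ i, (K i)ᴴ * K i = 1

theorem trace_krausMap {K : ι → Matrix m m ℂ} (hK : IsTracePreserving K) (B : Matrix m m ℂ) :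
    (krausMap K B).trace = B.trace := by
  rw [krausMap, trace_sum]
  simp_rw [trace_mul_cycle _ B]
  rw [← trace_sum, ← Finset.sum_mul, hK, one_mul]

theorem IsTracePreserving.comp {J I : Type*} [Fintype J] [Fintype I]
    {R : J → Matrix m m ℂ} {E : I → Matrix m m ℂ}
    (hR : IsTracePreserving R) (hE : IsTracePreserving E) :
    IsTracePreserving fun p : J × I => R p.1 * E p.2 := by
  unfold IsTracePreserving at *
  calc ∑ p : J × I, (R p.1 * E p.2)ᴴ * (R p.1 * E p.2)
      = ∑ i, (E i)ᴴ * (∑ j, (R j)ᴴ * R j) * E i := by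
        rw [Fintype.sum_prod_type, Finset.sum_comm]
        simp only [Finset.mul_sum, Finset.sum_mul, conjTranspose_mul, mul_assoc]
    _ = 1 := by simp only [hR, mul_one, hE]

variable {K : ι → Matrix m m ℂ} {P : Matrix m m ℂ} {η : ℝ}

theorem re_trace_krausMap_mul_le_of_mulVec_eq_zero (hK : IsTracePreserving K)
    (hfid : ∀ φ : m → ℂ, star φ ⬝ᵥ φ = 1 → P *ᵥ φ = φ →
      1 - η ≤ (star φ ⬝ᵥ (krausMap K (vecMulVec φ (star φ)) *ᵥ φ)).re)
    {φ : m → ℂ} (hφ : star φ ⬝ᵥ φ = 1) (hPφ : P *ᵥ φ = φ)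
    {p : Matrix m m ℂ} (hp : IsStarProjection p) (hpφ : p *ᵥ φ = 0) :
    (krausMap K (vecMulVec φ (star φ)) * p).trace.re ≤ η := by
  set σ := vecMulVec φ (star φ)
  have hσ : IsStarProjection σ := isStarProjection_vecMulVec_star hφ
  have hpσ : p * σ = 0 := by rw [mul_vecMulVec, hpφ, zero_vecMulVec]
  have hle := re_trace_mul_le_re_trace_of_isStarProjection
    (krausMap_posSemidef K (posSemidef_vecMulVec_self_star φ)) (hp.add hσ hpσ)
  rw [mul_add, trace_add, Complex.add_re, trace_krausMap hK, trace_vecMulVec_star, hφ,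
    ← dotProduct_mulVec_eq_trace] at hle
  linarith [hfid φ hφ hPφ, Complex.one_re]

theorem re_dotProduct_krausMap_mulVec_le (hK : IsTracePreserving K) (hP : IsStarProjection P)
    (hfid : ∀ φ : m → ℂ, star φ ⬝ᵥ φ = 1 → P *ᵥ φ = φ →
      1 - η ≤ (star φ ⬝ᵥ (krausMap K (vecMulVec φ (star φ)) *ᵥ φ)).re)
    {ψ : m → ℂ} (hψ : star ψ ⬝ᵥ ψ = 1) (hPψ : P *ᵥ ψ = ψ) :
    (star ψ ⬝ᵥ (krausMap K P *ᵥ ψ)).re ≤ 1 + (P.trace.re - 1) * η := by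
  set ρ := vecMulVec ψ (star ψ)
  have hρ : IsStarProjection ρ := isStarProjection_vecMulVec_star hψ
  have hPρ : P * ρ = ρ := by rw [mul_vecMulVec, hPψ]
  have hρP : ρ * P = ρ := by
    simpa [hρ.isSelfAdjoint.star_eq, hP.isSelfAdjoint.star_eq] using congr(star $(hPρ))
  set A := krausMap (fun i => (K i)ᴴ) ρ
  have hsplit : star ψ ⬝ᵥ (krausMap K P *ᵥ ψ) = (A * ρ).trace + (A * (P - ρ)).trace := by
    rw [dotProduct_mulVec_eq_trace, trace_krausMap_mul, trace_mul_comm, ← trace_add, ← mul_add,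
      add_sub_cancel]
  have hρA : (A * ρ).trace.re ≤ 1 := by
    rw [trace_mul_comm, ← trace_krausMap_mul]
    calc _ ≤ (krausMap K ρ).trace.re := re_trace_mul_le_re_trace_of_isStarProjection
          (krausMap_posSemidef K (posSemidef_vecMulVec_self_star ψ)) hρ
      _ = 1 := by rw [trace_krausMap hK, trace_vecMulVec_star, hψ, Complex.one_re]
  have hQA : (A * (P - ρ)).trace.re ≤ η * (P - ρ).trace.re := by
    refine re_trace_mul_le_of_forall_unit (hρ.sub_of_mul_eq_right hP hPρ) fun φ hφ hQφ => ?_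
    have hPφ : P *ᵥ φ = φ := by
      rw [← hQφ, mulVec_mulVec, mul_sub, hP.isIdempotentElem.eq, hPρ]
    have hρφ : ρ *ᵥ φ = 0 := by
      rw [← hQφ, mulVec_mulVec, mul_sub, hρP, hρ.isIdempotentElem.eq, sub_self, zero_mulVec]
    rw [dotProduct_mulVec_eq_trace, trace_mul_comm, ← trace_krausMap_mul]
    exact re_trace_krausMap_mul_le_of_mulVec_eq_zero hK hfid hφ hPφ hρ hρφ
  rw [trace_sub, trace_vecMulVec_star, hψ, Complex.sub_re, Complex.one_re] at hQA
  rw [hsplit, Complex.add_re]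
  linarith

end Kraus

end

theorem recovered_code_projector_bound_general
    {n : ℕ} {I J : Type*} [Fintype I] [Fintype J]
    (E : I → Matrix (Fin n) (Fin n) ℂ) (R : J → Matrix (Fin n) (Fin n) ℂ)
    (P : Matrix (Fin n) (Fin n) ℂ) (d : ℕ) (η : ℝ)
    (hP1 : P * P = P) (hP2 : Pᴴ = P) (hrank : P.rank = d)
    (hTP : ∑ i, (E i)ᴴ * E i = 1)
    (hRTP : ∑ j, (R j)ᴴ * R j = 1)
    (hηfid : ∀ φ : Fin n → ℂ, star φ ⬝ᵥ φ = 1 → P *ᵥ φ = φ →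
      1 - η ≤ (star φ ⬝ᵥ ((∑ j, ∑ i,
        R j * E i * vecMulVec φ (star φ) * (E i)ᴴ * (R j)ᴴ) *ᵥ φ)).re) :
    ∀ ψ : Fin n → ℂ, star ψ ⬝ᵥ ψ = 1 → P *ᵥ ψ = ψ →
      (star ψ ⬝ᵥ ((∑ j, ∑ i, R j * E i * P * (E i)ᴴ * (R j)ᴴ) *ᵥ ψ)).re
        ≤ 1 + ((d : ℝ) - 1) * η := by
  intro ψ hψ hPψ
  have hP : IsStarProjection P := ⟨hP1, hP2⟩
  have htrace : P.trace.re = d := by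
    rw [trace_eq_rank_of_isIdempotentElem hP1, hrank, Complex.natCast_re]
  simp only [← krausMap_prod] at hηfid ⊢
  simpa [htrace] using
    re_dotProduct_krausMap_mulVec_le (IsTracePreserving.comp hRTP hTP) hP hηfid hψ hPψ

/-- Bound on the recovered image of the code projector: if the trace-preserving recovery
`{R_j}`, supported on the code of the rank-`d` projection `P`, achieves fidelity loss at
most `η` on every pure code state, then for every pure code state `ψ`,
`⟨ψ, (∑_{j,i} R_j E_i P E_iᴴ R_jᴴ) ψ⟩ ≤ 1 + (d-1)η`. -/
theorem recovered_code_projector_bound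
    {n : ℕ} {I J : Type*} [Fintype I] [Fintype J]
    (E : I → Matrix (Fin n) (Fin n) ℂ) (R : J → Matrix (Fin n) (Fin n) ℂ)
    (P : Matrix (Fin n) (Fin n) ℂ) (d : ℕ) (η : ℝ)
    (hP1 : P * P = P) (hP2 : Pᴴ = P) (hrank : P.rank = d) (hd : 1 ≤ d)
    (hTP : ∑ i, (E i)ᴴ * E i = 1)
    (hRTP : ∑ j, (R j)ᴴ * R j = 1) (hRP : ∀ j, R j = P * R j)
    (hη0 : 0 ≤ η) (hη1 : η ≤ 1)
    (hηfid : ∀ φ : Fin n → ℂ, star φ ⬝ᵥ φ = 1 → P *ᵥ φ = φ →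
      1 - η ≤ (star φ ⬝ᵥ ((∑ j, ∑ i,
        R j * E i * vecMulVec φ (star φ) * (E i)ᴴ * (R j)ᴴ) *ᵥ φ)).re) :
    ∀ ψ : Fin n → ℂ, star ψ ⬝ᵥ ψ = 1 → P *ᵥ ψ = ψ →
      (star ψ ⬝ᵥ ((∑ j, ∑ i, R j * E i * P * (E i)ᴴ * (R j)ᴴ) *ᵥ ψ)).re
        ≤ 1 + ((d : ℝ) - 1) * η :=
  recovered_code_projector_bound_general E R P d η hP1 hP2 hrank hTP hRTP hηfid
end

section
/- The transpose channel composed with the noise is trace preserving and unital on the code: Let {E_i}_{i∈I} be a TP Kraus family on ℂⁿ, P an orthogonal projection, T the positive semidefinite square root of E(P) := ∑_i E_i P E_iᴴ, and S the Moore–Penrose pseudoinverse of T. Define A_{ij} := P E_iᴴ S E_j P for i, j ∈ I. Then ∑_{i,j∈I} A_{ij}ᴴ A_{ij} = P and ∑_{i,j∈I} A_{ij} A_{ij}ᴴ = P. -/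
open Matrix
open scoped ComplexOrder

/-!
Write `F i := E i * P`, so that `A i j = (F i)ᴴ * S * F j` and `T * T = ∑ i, F i * (F i)ᴴ`.
Since `T * S` fixes `T`, the operator `1 - T * S` kills `∑ i, F i * (F i)ᴴ`, hence kills every
`F i`: each `F i` lies in the range of `T`, where `T * S` is the identity. Summing over `i` then
gives `∑ i, (A i j)ᴴ * A i j = (T * S * F j)ᴴ * (T * S * F j) = (F j)ᴴ * F j`, and
`∑ j, (F j)ᴴ * F j = P * (∑ j, (E j)ᴴ * E j) * P = P`. As `S` is Hermitian, `(A i j)ᴴ = A j i`,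
so the second identity is the first one with the indices swapped.
-/

namespace Matrix

variable {ι m n R : Type*} [Fintype ι] [Fintype m] [Fintype n]
  [Ring R] [PartialOrder R] [StarRing R] [StarOrderedRing R] [NoZeroDivisors R]

theorem eq_zero_of_sum_mul_conjTranspose_self_eq_zero {F : ι → Matrix m n R}
    (h : ∑ i, F i * (F i)ᴴ = 0) (i : ι) : F i = 0 := by
  have htrace : ∑ i, (F i * (F i)ᴴ).trace = 0 := by rw [← trace_sum, h, trace_zero]
  rw [Finset.sum_eq_zero_iff_of_nonneg fun j _ =>
    (posSemidef_self_mul_conjTranspose (F j)).trace_nonneg] at htrace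
  exact trace_mul_conjTranspose_self_eq_zero_iff.mp (htrace i (Finset.mem_univ i) :)

theorem mul_eq_zero_of_mul_sum_mul_conjTranspose_self_eq_zero {F : ι → Matrix m n R}
    {M : Matrix m m R} (h : M * ∑ i, F i * (F i)ᴴ = 0) (i : ι) : M * F i = 0 := by
  refine eq_zero_of_sum_mul_conjTranspose_self_eq_zero (F := fun i => M * F i) ?_ i
  calc ∑ i, M * F i * (M * F i)ᴴ = M * (∑ i, F i * (F i)ᴴ) * Mᴴ := by
        simp only [conjTranspose_mul, Matrix.mul_sum, Matrix.sum_mul, Matrix.mul_assoc]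
    _ = 0 := by rw [h, Matrix.zero_mul]

theorem mul_mul_eq_self_of_mul_self_eq_sum {F : ι → Matrix m n R} {T S : Matrix m m R}
    (hTST : T * S * T = T) (hT : T * T = ∑ i, F i * (F i)ᴴ) (i : ι) : T * S * F i = F i := by
  classical
  have hker : (1 - T * S) * ∑ i, F i * (F i)ᴴ = 0 := by
    rw [← hT, ← Matrix.mul_assoc, Matrix.sub_mul, Matrix.one_mul, hTST, sub_self,
      Matrix.zero_mul]
  have := mul_eq_zero_of_mul_sum_mul_conjTranspose_self_eq_zero hker i
  rw [Matrix.sub_mul, Matrix.one_mul, sub_eq_zero] at this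
  exact this.symm

theorem sum_sum_conjTranspose_mul_self_eq_of_mul_self_eq_sum {F : ι → Matrix m n R}
    {T S : Matrix m m R} (hTh : T.IsHermitian) (hTST : T * S * T = T)
    (hT : T * T = ∑ i, F i * (F i)ᴴ) :
    ∑ i, ∑ j, ((F i)ᴴ * S * F j)ᴴ * ((F i)ᴴ * S * F j) = ∑ j, (F j)ᴴ * F j := by
  rw [Finset.sum_comm]
  refine Finset.sum_congr rfl fun j _ => ?_
  calc ∑ i, ((F i)ᴴ * S * F j)ᴴ * ((F i)ᴴ * S * F j)
      = (S * F j)ᴴ * (∑ i, F i * (F i)ᴴ) * (S * F j) := by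
        simp only [conjTranspose_mul, conjTranspose_conjTranspose, Matrix.mul_sum,
          Matrix.sum_mul, Matrix.mul_assoc]
    _ = (T * S * F j)ᴴ * (T * S * F j) := by
        simp only [← hT, conjTranspose_mul, hTh.eq, Matrix.mul_assoc]
    _ = (F j)ᴴ * F j := by rw [mul_mul_eq_self_of_mul_self_eq_sum hTST hT]

theorem sum_sum_mul_conjTranspose_self_eq_of_mul_self_eq_sum {F : ι → Matrix m n R}
    {T S : Matrix m m R} (hTh : T.IsHermitian) (hSh : S.IsHermitian) (hTST : T * S * T = T)
    (hT : T * T = ∑ i, F i * (F i)ᴴ) :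
    ∑ i, ∑ j, ((F i)ᴴ * S * F j) * ((F i)ᴴ * S * F j)ᴴ = ∑ j, (F j)ᴴ * F j := by
  have hswap : ∀ i j, ((F i)ᴴ * S * F j)ᴴ = (F j)ᴴ * S * F i := fun i j => by
    rw [conjTranspose_mul, conjTranspose_mul, conjTranspose_conjTranspose, hSh.eq,
      Matrix.mul_assoc]
  simp only [hswap]
  rw [Finset.sum_comm, ← sum_sum_conjTranspose_mul_self_eq_of_mul_self_eq_sum hTh hTST hT]
  simp only [hswap]

end Matrix

theorem transpose_channel_TP_and_unital_general
    {n : ℕ} {I : Type*} [Fintype I]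
    (E : I → Matrix (Fin n) (Fin n) ℂ)
    (P T S : Matrix (Fin n) (Fin n) ℂ)
    (hP1 : P * P = P) (hP2 : Pᴴ = P)
    (hTP : ∑ i, (E i)ᴴ * E i = 1)
    (hT : T.PosSemidef) (hTsq : T * T = ∑ i, E i * P * (E i)ᴴ)
    (hS : S.PosSemidef) (hTST : T * S * T = T) :
    (∑ i, ∑ j, (P * (E i)ᴴ * S * E j * P)ᴴ * (P * (E i)ᴴ * S * E j * P) = P) ∧
    (∑ i, ∑ j, (P * (E i)ᴴ * S * E j * P) * (P * (E i)ᴴ * S * E j * P)ᴴ = P) := by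
  have hA : ∀ i j, P * (E i)ᴴ * S * E j * P = (E i * P)ᴴ * S * (E j * P) := fun i j => by
    simp only [conjTranspose_mul, hP2, Matrix.mul_assoc]
  have hTF : T * T = ∑ i, (E i * P) * (E i * P)ᴴ := by
    simp only [hTsq, conjTranspose_mul, hP2, Matrix.mul_assoc, ← Matrix.mul_assoc P P, hP1]
  have hFF : ∑ j, (E j * P)ᴴ * (E j * P) = P :=
    calc ∑ j, (E j * P)ᴴ * (E j * P) = P * (∑ j, (E j)ᴴ * E j) * P := by
          simp only [conjTranspose_mul, hP2, Matrix.mul_sum, Matrix.sum_mul, Matrix.mul_assoc]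
      _ = P := by rw [hTP, Matrix.mul_one, hP1]
  simp only [hA]
  exact ⟨(sum_sum_conjTranspose_mul_self_eq_of_mul_self_eq_sum hT.1 hTST hTF).trans hFF,
    (sum_sum_mul_conjTranspose_self_eq_of_mul_self_eq_sum hT.1 hS.1 hTST hTF).trans hFF⟩

/-- The transpose channel composed with the noise is trace preserving and unital on the
code: with `A_{ij} := P E_iᴴ S E_j P`, where `T = sqrt(E(P))` and `S` is its Moore–Penrose
pseudoinverse, one has `∑_{ij} A_{ij}ᴴ A_{ij} = P` and `∑_{ij} A_{ij} A_{ij}ᴴ = P`. -/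
theorem transpose_channel_TP_and_unital
    {n : ℕ} {I : Type*} [Fintype I]
    (E : I → Matrix (Fin n) (Fin n) ℂ)
    (P T S : Matrix (Fin n) (Fin n) ℂ)
    (hP1 : P * P = P) (hP2 : Pᴴ = P)
    (hTP : ∑ i, (E i)ᴴ * E i = 1)
    (hT : T.PosSemidef) (hTsq : T * T = ∑ i, E i * P * (E i)ᴴ)
    (hS : S.PosSemidef) (hSTS : S * T * S = S) (hTST : T * S * T = T)
    (hcomm : S * T = T * S) :
    (∑ i, ∑ j, (P * (E i)ᴴ * S * E j * P)ᴴ * (P * (E i)ᴴ * S * E j * P) = P) ∧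
    (∑ i, ∑ j, (P * (E i)ᴴ * S * E j * P) * (P * (E i)ᴴ * S * E j * P)ᴴ = P) :=
  transpose_channel_TP_and_unital_general E P T S hP1 hP2 hTP hT hTsq hS hTST
end
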